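/- Dual isothermic surface (Theorem 'Dual isothermic surface', smooth case): Let N ≥ 2, let f: ℝ² → ℝᴺ and s: ℝ² → ℝ be twice continuously differentiable with s everywhere positive, and suppose ⟨∂₁f, ∂₂f⟩ = 0 and ∂₁∂₂f = (∂₂s/s)∂₁f + (∂₁s/s)∂₂f hold everywhere on ℝ². Then: (a) ∂₂(∂₁f/s²) + ∂₁(∂₂f/s²) = 0 everywhere (the one-form df* with ∂₁f* = ∂₁f/s², ∂₂f* = −∂₂f/s² is closed); (b) the functions α₁ = ‖∂₁f‖²/s² and α₂ = ‖∂₂f‖²/s² satisfy ∂₂α₁ = 0 and ∂₁α₂ = 0 (they depend only on u₁ and u₂ respectively); (c) any twice continuously differentiable f*: ℝ² → ℝᴺ with ∂₁f* = ∂₁f/s² and ∂₂f* = −∂₂f/s² satisfies ⟨∂₁f*, ∂₂f*⟩ = 0, ‖∂₁f*‖² = α₁·s⁻², ‖∂₂f*‖² = α₂·s⁻², and ∂₁∂₂f* = (∂₂(s⁻¹)·s)∂₁f* + (∂₁(s⁻¹)·s)∂₂f*. -/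

import Mathlib

/-- Partial derivative in the first coordinate direction of `ℝ²`. -/
noncomputable def pd1 {E : Type*} [NormedAddCommGroup E] [NormedSpace ℝ E]
    (g : ℝ × ℝ → E) (u : ℝ × ℝ) : E :=
  fderiv ℝ g u (1, 0)

/-- Partial derivative in the second coordinate direction of `ℝ²`. -/
noncomputable def pd2 {E : Type*} [NormedAddCommGroup E] [NormedSpace ℝ E]
    (g : ℝ × ℝ → E) (u : ℝ × ℝ) : E :=
  fderiv ℝ g u (0, 1)

/-!
All three parts are pointwise computations with directional derivatives `∂_v`, `∂_w` along
arbitrary directions of a normed space, with the isothermic condition written as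
`∂_v ∂_w f = (∂_w log s) ∂_v f + (∂_v log s) ∂_w f`. The product rule gives
`∂_w (s⁻² ∂_v f) = s⁻² (∂_w ∂_v f - 2 (∂_w log s) ∂_v f)`, so (a) follows from the symmetry of
second derivatives, and `∂_w (‖∂_v f‖² / s²) = 2 s⁻² (⟪∂_v f, ∂_w ∂_v f⟫ - (∂_w log s) ‖∂_v f‖²)`
vanishes because `∂_v f ⟂ ∂_w f` (b). For (c), differentiating `∂_w f* = -s⁻² ∂_w f` along `v`
and substituting the condition for `f` gives the same condition for `f*` with `s` replaced by
`s⁻¹`, since `∂ log s⁻¹ = -∂ log s`.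
-/

section
variable {V E : Type*} [NormedAddCommGroup V] [NormedSpace ℝ V]
  [NormedAddCommGroup E] [InnerProductSpace ℝ E] {f g : V → E} {s : V → ℝ} {u v w : V}

theorem fderiv_fun_inv_apply (hs : DifferentiableAt ℝ s u) (hs0 : s u ≠ 0) (w : V) :
    fderiv ℝ (fun x => (s x)⁻¹) u w = -fderiv ℝ s u w / s u ^ 2 := by
  rw [HasFDerivAt.fderiv (f := fun x => (s x)⁻¹)
    ((hasDerivAt_inv hs0).comp_hasFDerivAt u hs.hasFDerivAt)]
  simp only [neg_smul, neg_apply, smul_apply, smul_eq_mul]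
  ring

theorem fderiv_inv_sq_apply (hs : DifferentiableAt ℝ s u) (hs0 : s u ≠ 0) (w : V) :
    fderiv ℝ (fun x => (s x ^ 2)⁻¹) u w = -2 * fderiv ℝ s u w / s u ^ 3 := by
  rw [HasFDerivAt.fderiv (f := fun x => (s x ^ 2)⁻¹)
    ((hasDerivAt_inv (pow_ne_zero 2 hs0)).comp_hasFDerivAt u (hs.hasFDerivAt.pow 2))]
  simp only [Nat.add_one_sub_one, pow_one, nsmul_eq_mul, Nat.cast_ofNat, neg_smul, neg_apply,
    smul_apply, smul_eq_mul, neg_mul]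
  field_simp

theorem fderiv_inv_sq_smul_apply (hs : DifferentiableAt ℝ s u) (hs0 : s u ≠ 0)
    (hg : DifferentiableAt ℝ g u) (w : V) :
    fderiv ℝ (fun x => (s x ^ 2)⁻¹ • g x) u w =
      (s u ^ 2)⁻¹ • (fderiv ℝ g u w - (2 * fderiv ℝ s u w / s u) • g u) := by
  have hc : DifferentiableAt ℝ (fun x => (s x ^ 2)⁻¹) u := by
    fun_prop (disch := exact pow_ne_zero 2 hs0)
  rw [fderiv_fun_smul hc hg]
  simp only [add_apply, smul_apply, ContinuousLinearMap.smulRight_apply,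
    fderiv_inv_sq_apply hs hs0]
  match_scalars <;> field_simp

theorem fderiv_norm_sq_div_sq_apply (hs : DifferentiableAt ℝ s u) (hs0 : s u ≠ 0)
    (hg : DifferentiableAt ℝ g u) (w : V) :
    fderiv ℝ (fun x => ‖g x‖ ^ 2 / s x ^ 2) u w =
      2 * (inner ℝ (g u) (fderiv ℝ g u w) - fderiv ℝ s u w / s u * ‖g u‖ ^ 2) / s u ^ 2 := by
  simp_rw [div_eq_mul_inv (‖g _‖ ^ 2)]
  have hc : DifferentiableAt ℝ (fun x => (s x ^ 2)⁻¹) u := by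
    fun_prop (disch := exact pow_ne_zero 2 hs0)
  rw [fderiv_fun_mul hg.hasFDerivAt.norm_sq.differentiableAt hc, hg.hasFDerivAt.norm_sq.fderiv]
  simp only [add_apply, smul_apply, fderiv_inv_sq_apply hs hs0, smul_eq_mul,
    ContinuousLinearMap.comp_apply, coe_innerSL_apply, nsmul_eq_mul, Nat.cast_ofNat]
  field_simp
  ring

theorem ContDiffAt.differentiableAt_fderiv_apply (hf : ContDiffAt ℝ 2 f u) (w : V) :
    DifferentiableAt ℝ (fun x => fderiv ℝ f x w) u :=
  ((hf.fderiv_right (m := 1) (by norm_num)).differentiableAt one_ne_zero).clm_apply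
    (differentiableAt_const w)

theorem ContDiffAt.fderiv_fderiv_apply_comm (hf : ContDiffAt ℝ 2 f u) (v w : V) :
    fderiv ℝ (fun x => fderiv ℝ f x w) u v = fderiv ℝ (fun x => fderiv ℝ f x v) u w := by
  have hf' : DifferentiableAt ℝ (fderiv ℝ f) u :=
    (hf.fderiv_right (m := 1) (by norm_num)).differentiableAt one_ne_zero
  rw [fderiv_clm_apply hf' (differentiableAt_const w),
    fderiv_clm_apply hf' (differentiableAt_const v)]
  simpa using hf.isSymmSndFDerivAt (by simp) v w

theorem norm_inv_sq_smul_sq (a : ℝ) (x : E) : ‖(a ^ 2)⁻¹ • x‖ ^ 2 = ‖x‖ ^ 2 / a ^ 2 * (a ^ 2)⁻¹ := by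
  rw [norm_smul, norm_inv, norm_pow, Real.norm_eq_abs, sq_abs]
  ring

def IsothermicMixedDerivAt (f : V → E) (s : V → ℝ) (v w u : V) : Prop :=
  fderiv ℝ (fun x => fderiv ℝ f x w) u v =
    (fderiv ℝ s u w / s u) • fderiv ℝ f u v + (fderiv ℝ s u v / s u) • fderiv ℝ f u w

namespace IsothermicMixedDerivAt

theorem symm (hf : ContDiffAt ℝ 2 f u) (h : IsothermicMixedDerivAt f s v w u) :
    IsothermicMixedDerivAt f s w v u := by
  rw [IsothermicMixedDerivAt, hf.fderiv_fderiv_apply_comm, h, add_comm]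

theorem christoffel_closed (h : IsothermicMixedDerivAt f s v w u) (hf : ContDiffAt ℝ 2 f u)
    (hs : DifferentiableAt ℝ s u) (hs0 : s u ≠ 0) :
    fderiv ℝ (fun x => (s x ^ 2)⁻¹ • fderiv ℝ f x v) u w +
      fderiv ℝ (fun x => (s x ^ 2)⁻¹ • fderiv ℝ f x w) u v = 0 := by
  rw [fderiv_inv_sq_smul_apply hs hs0 (hf.differentiableAt_fderiv_apply v),
    fderiv_inv_sq_smul_apply hs hs0 (hf.differentiableAt_fderiv_apply w), h.symm hf, h]
  match_scalars <;> field_simp <;> ring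

theorem fderiv_norm_sq_div_sq_eq_zero (h : IsothermicMixedDerivAt f s w v u)
    (hf : DifferentiableAt ℝ (fun x => fderiv ℝ f x v) u) (hs : DifferentiableAt ℝ s u)
    (hs0 : s u ≠ 0) (horth : inner ℝ (fderiv ℝ f u v) (fderiv ℝ f u w) = 0) :
    fderiv ℝ (fun x => ‖fderiv ℝ f x v‖ ^ 2 / s x ^ 2) u w = 0 := by
  rw [fderiv_norm_sq_div_sq_apply hs hs0 hf, h, inner_add_right, inner_smul_right,
    inner_smul_right, horth, real_inner_self_eq_norm_sq]
  ring

theorem christoffel_dual {fstar : V → E} (h : IsothermicMixedDerivAt f s v w u)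
    (hf : DifferentiableAt ℝ (fun x => fderiv ℝ f x w) u) (hs : DifferentiableAt ℝ s u)
    (hs0 : s u ≠ 0) (hv : fderiv ℝ fstar u v = (s u ^ 2)⁻¹ • fderiv ℝ f u v)
    (hw : ∀ x, fderiv ℝ fstar x w = -((s x ^ 2)⁻¹ • fderiv ℝ f x w)) :
    IsothermicMixedDerivAt fstar (fun x => (s x)⁻¹) v w u := by
  rw [IsothermicMixedDerivAt]
  simp_rw [hw]
  rw [fderiv_fun_neg, neg_apply, fderiv_inv_sq_smul_apply hs hs0 hf, hv,
    fderiv_fun_inv_apply hs hs0, fderiv_fun_inv_apply hs hs0, h]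
  match_scalars
  · field_simp
  · field_simp
    ring

end IsothermicMixedDerivAt

end

theorem dual_isothermic_surface_general {N : ℕ}
    (f : ℝ × ℝ → EuclideanSpace ℝ (Fin N)) (s : ℝ × ℝ → ℝ)
    (hf : ContDiff ℝ 2 f) (hs : ContDiff ℝ 2 s) (hs0 : ∀ u, 0 < s u)
    (horth : ∀ u, (inner ℝ (pd1 f u) (pd2 f u) : ℝ) = 0)
    (hkoe : ∀ u, pd1 (fun v => pd2 f v) u =
      (pd2 s u / s u) • pd1 f u + (pd1 s u / s u) • pd2 f u) :
    (∀ u, pd2 (fun v => ((s v) ^ 2)⁻¹ • pd1 f v) u +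
        pd1 (fun v => ((s v) ^ 2)⁻¹ • pd2 f v) u = 0) ∧
    (∀ u, pd2 (fun v => ‖pd1 f v‖ ^ 2 / (s v) ^ 2) u = 0) ∧
    (∀ u, pd1 (fun v => ‖pd2 f v‖ ^ 2 / (s v) ^ 2) u = 0) ∧
    (∀ fstar : ℝ × ℝ → EuclideanSpace ℝ (Fin N), ContDiff ℝ 2 fstar →
      (∀ u, pd1 fstar u = ((s u) ^ 2)⁻¹ • pd1 f u) →
      (∀ u, pd2 fstar u = -(((s u) ^ 2)⁻¹ • pd2 f u)) →
      ∀ u, (inner ℝ (pd1 fstar u) (pd2 fstar u) : ℝ) = 0 ∧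
        ‖pd1 fstar u‖ ^ 2 = (‖pd1 f u‖ ^ 2 / (s u) ^ 2) * ((s u) ^ 2)⁻¹ ∧
        ‖pd2 fstar u‖ ^ 2 = (‖pd2 f u‖ ^ 2 / (s u) ^ 2) * ((s u) ^ 2)⁻¹ ∧
        pd1 (fun v => pd2 fstar v) u =
          (pd2 (fun v => (s v)⁻¹) u * s u) • pd1 fstar u +
            (pd1 (fun v => (s v)⁻¹) u * s u) • pd2 fstar u) := by
  have hf' (u : ℝ × ℝ) : ContDiffAt ℝ 2 f u := hf.contDiffAt
  have hs' (u : ℝ × ℝ) : DifferentiableAt ℝ s u := hs.differentiable two_ne_zero u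
  have hs0' (u : ℝ × ℝ) : s u ≠ 0 := (hs0 u).ne'
  have hkoe₁₂ (u : ℝ × ℝ) : IsothermicMixedDerivAt f s (1, 0) (0, 1) u := hkoe u
  have hkoe₂₁ (u : ℝ × ℝ) : IsothermicMixedDerivAt f s (0, 1) (1, 0) u := (hkoe₁₂ u).symm (hf' u)
  refine ⟨fun u => (hkoe₁₂ u).christoffel_closed (hf' u) (hs' u) (hs0' u),
    fun u => (hkoe₂₁ u).fderiv_norm_sq_div_sq_eq_zero ((hf' u).differentiableAt_fderiv_apply _)
      (hs' u) (hs0' u) (horth u),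
    fun u => (hkoe₁₂ u).fderiv_norm_sq_div_sq_eq_zero ((hf' u).differentiableAt_fderiv_apply _)
      (hs' u) (hs0' u) ((real_inner_comm _ _).trans (horth u)),
    fun fstar _ hfstar₁ hfstar₂ u => ⟨?_, ?_, ?_, ?_⟩⟩
  · simp only [hfstar₁, hfstar₂, inner_neg_right, inner_smul_left, inner_smul_right, horth u,
      mul_zero, neg_zero]
  · rw [hfstar₁, norm_inv_sq_smul_sq]
  · rw [hfstar₂, norm_neg, norm_inv_sq_smul_sq]
  · have h := (hkoe₁₂ u).christoffel_dual
      ((hf' u).differentiableAt_fderiv_apply _) (hs' u) (hs0' u) (hfstar₁ u) hfstar₂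
    rw [IsothermicMixedDerivAt, div_inv_eq_mul, div_inv_eq_mul] at h
    exact h

/-- Dual isothermic surface: for an isothermic surface `f` with conformal
metric `s`, (a) the Christoffel one-form is closed, (b) the factors
`α₁ = ‖∂₁f‖²/s²`, `α₂ = ‖∂₂f‖²/s²` depend only on `u₁` resp. `u₂`, and
(c) any primitive `f*` of the Christoffel one-form is isothermic with metric
`s⁻¹` and the same factors. -/
theorem dual_isothermic_surface {N : ℕ} (hN : 2 ≤ N)
    (f : ℝ × ℝ → EuclideanSpace ℝ (Fin N)) (s : ℝ × ℝ → ℝ)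
    (hf : ContDiff ℝ 2 f) (hs : ContDiff ℝ 2 s) (hs0 : ∀ u, 0 < s u)
    (horth : ∀ u, (inner ℝ (pd1 f u) (pd2 f u) : ℝ) = 0)
    (hkoe : ∀ u, pd1 (fun v => pd2 f v) u =
      (pd2 s u / s u) • pd1 f u + (pd1 s u / s u) • pd2 f u) :
    (∀ u, pd2 (fun v => ((s v) ^ 2)⁻¹ • pd1 f v) u +
        pd1 (fun v => ((s v) ^ 2)⁻¹ • pd2 f v) u = 0) ∧
    (∀ u, pd2 (fun v => ‖pd1 f v‖ ^ 2 / (s v) ^ 2) u = 0) ∧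
    (∀ u, pd1 (fun v => ‖pd2 f v‖ ^ 2 / (s v) ^ 2) u = 0) ∧
    (∀ fstar : ℝ × ℝ → EuclideanSpace ℝ (Fin N), ContDiff ℝ 2 fstar →
      (∀ u, pd1 fstar u = ((s u) ^ 2)⁻¹ • pd1 f u) →
      (∀ u, pd2 fstar u = -(((s u) ^ 2)⁻¹ • pd2 f u)) →
      ∀ u, (inner ℝ (pd1 fstar u) (pd2 fstar u) : ℝ) = 0 ∧
        ‖pd1 fstar u‖ ^ 2 = (‖pd1 f u‖ ^ 2 / (s u) ^ 2) * ((s u) ^ 2)⁻¹ ∧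
        ‖pd2 fstar u‖ ^ 2 = (‖pd2 f u‖ ^ 2 / (s u) ^ 2) * ((s u) ^ 2)⁻¹ ∧
        pd1 (fun v => pd2 fstar v) u =
          (pd2 (fun v => (s v)⁻¹) u * s u) • pd1 fstar u +
            (pd1 (fun v => (s v)⁻¹) u * s u) • pd2 fstar u) :=
  dual_isothermic_surface_general f s hf hs hs0 horth hkoe
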